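/- arXiv:1011.1650 — 2 statements merged into one kernel-verified Lean document; each statement's English description precedes it below -/
import Mathlib

section
/- Let U be the (n+1)×(n+1) upper triangular matrix with entries u_{ij} = (−1)^{j−i}·binom(j,i)·(α₃+(n−j)τ;τ)_{j−i}/(α₁+α₂+2iτ;τ)_{j−i} for 0 ≤ i ≤ j ≤ n, and let U* be the (n+1)×(n+1) upper triangular matrix with entries u*_{ij} = binom(j,i)·(α₃+(n−j)τ;τ)_{j−i}/(α₁+α₂+(j+i−1)τ;τ)_{j−i} for 0 ≤ i ≤ j ≤ n. Then U* = U⁻¹; equivalently, for all 0 ≤ i ≤ j ≤ n, Σ_{k=i}^{j} u_{ik}·u*_{kj} equals 1 if i = j and equals 0 if i < j. -/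
/-!
Put `a = α₁ + α₂`, `c = α₃`, and fix `i < j = i + m`. In the product `u_{ik} u*_{kj}` the two
`c`-Pochhammer symbols merge into `(c + (n - j)τ; τ)_m`, independent of `k`, and
`C(k,i) C(j,k) = C(j,i) C(m, k - i)`. Over the common denominator `(a + 2iτ; τ)_{2m-1}` the
entry `(U U*)_{ij}` becomes a multiple of `∑_l (-1)^l C(m,l) (a + (2i + l)τ; τ)_{m-1}`: the
`m`-th finite difference of a polynomial of degree `m - 1` in `l`, which vanishes.
-/

open Finset

/-- The shifted Pochhammer symbol `(x;τ)_i = x(x+τ)⋯(x+(i−1)τ)`. -/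
noncomputable def poch (x τ : ℝ) (i : ℕ) : ℝ := ∏ k ∈ Finset.range i, (x + (k : ℝ) * τ)

open Polynomial in
theorem Polynomial.sum_range_neg_one_pow_mul_choose_mul_eval_eq_zero {R : Type*} [CommRing R]
    {P : R[X]} {m : ℕ} (hP : P.natDegree < m) :
    ∑ l ∈ range (m + 1), (-1) ^ l * (m.choose l : R) * P.eval (l : R) = 0 := by
  have h := congr_fun (fwdDiff_iter_eq_zero_of_degree_lt hP) 0
  rw [fwdDiff_iter_eq_sum_shift] at h
  have h' := congr_arg ((-1 : R) ^ m * ·) h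
  simp only [Pi.zero_apply, mul_zero, mul_sum, zero_add, nsmul_one, zsmul_eq_mul] at h'
  rw [← h']
  refine sum_congr rfl fun l hl => ?_
  obtain ⟨r, rfl⟩ := Nat.exists_eq_add_of_le (Nat.lt_succ_iff.mp (mem_range.mp hl))
  have hsq : (-1 : R) ^ r * (-1) ^ r = 1 := by rw [← mul_pow]; norm_num
  push_cast
  rw [Nat.add_sub_cancel_left, pow_add]
  linear_combination -(-1) ^ l * ((l + r).choose l : R) * P.eval (l : R) * hsq

theorem poch_add (x τ : ℝ) (p q : ℕ) :
    poch x τ (p + q) = poch x τ p * poch (x + p * τ) τ q := by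
  simp only [poch, prod_range_add]
  congr 1
  refine prod_congr rfl fun k _ => ?_
  push_cast
  ring

theorem poch_pos {x τ : ℝ} (hx : 0 < x) (hτ : 0 ≤ τ) (d : ℕ) : 0 < poch x τ d :=
  prod_pos fun k _ => by positivity

open Polynomial in
theorem exists_natDegree_le_eval_eq_poch (y τ : ℝ) (d : ℕ) :
    ∃ P : ℝ[X], P.natDegree ≤ d ∧ ∀ t : ℝ, P.eval t = poch (y + t * τ) τ d := by
  refine ⟨∏ r ∈ range d, (C τ * X + C (y + r * τ)), ?_, fun t => ?_⟩
  · refine (natDegree_prod_le _ _).trans ?_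
    have hsum := sum_le_card_nsmul (range d) (fun r => (C τ * X + C (y + r * τ)).natDegree) 1
      fun _ _ => natDegree_linear_le
    simpa using hsum
  · simp only [eval_prod, eval_add, eval_mul, eval_C, eval_X, poch]
    exact prod_congr rfl fun r _ => by ring

theorem sum_range_neg_one_pow_mul_choose_mul_poch_eq_zero (y τ : ℝ) (d : ℕ) :
    ∑ l ∈ range (d + 2), (-1) ^ l * ((d + 1).choose l : ℝ) * poch (y + l * τ) τ d = 0 := by
  obtain ⟨P, hdeg, heval⟩ := exists_natDegree_le_eval_eq_poch y τ d
  simpa only [heval] using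
    Polynomial.sum_range_neg_one_pow_mul_choose_mul_eval_eq_zero (Nat.lt_succ_of_le hdeg)

noncomputable def uEntry (a c τ : ℝ) (n i j : ℕ) : ℝ :=
  (-1) ^ (j - i) * (j.choose i : ℝ) *
    (poch (c + ((n : ℝ) - j) * τ) τ (j - i) / poch (a + 2 * i * τ) τ (j - i))

noncomputable def uStarEntry (a c τ : ℝ) (n i j : ℕ) : ℝ :=
  (j.choose i : ℝ) *
    (poch (c + ((n : ℝ) - j) * τ) τ (j - i) / poch (a + ((j : ℝ) + i - 1) * τ) τ (j - i))

theorem uEntry_mul_uStarEntry {a τ : ℝ} (ha : 0 < a) (hτ : 0 ≤ τ) (c : ℝ) (n i d l : ℕ)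
    (hl : l ≤ d + 1) :
    uEntry a c τ n i (i + l) * uStarEntry a c τ n (i + l) (i + (d + 1)) =
      ((i + (d + 1)).choose i * poch (c + ((n : ℝ) - (i + (d + 1) : ℕ)) * τ) τ (d + 1) /
          poch (a + 2 * i * τ) τ (2 * d + 1)) *
        ((-1) ^ l * (d + 1).choose l * poch (a + 2 * i * τ + l * τ) τ d) := by
  obtain ⟨r, hr⟩ : ∃ r, d + 1 = l + r := ⟨d + 1 - l, by omega⟩
  have hchoose : ((i + l).choose i : ℝ) * ((i + (d + 1)).choose (i + l) : ℝ) =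
      ((i + (d + 1)).choose i : ℝ) * ((d + 1).choose l : ℝ) := by
    rw [mul_comm]
    exact_mod_cast (Nat.choose_mul (Nat.le_add_right i l)).trans (by simp)
  unfold uEntry uStarEntry
  set y := a + 2 * i * τ
  have hy0 : 0 < y := by positivity
  have hnum : poch (c + ((n : ℝ) - (i + (d + 1) : ℕ)) * τ) τ (d + 1) =
      poch (c + ((n : ℝ) - (i + (d + 1) : ℕ)) * τ) τ r *
        poch (c + ((n : ℝ) - (i + l : ℕ)) * τ) τ l := by
    rw [hr, add_comm l r, poch_add]
    congr 2
    push_cast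
    ring
  have hshift :
      a + (((i + (d + 1) : ℕ) : ℝ) + (i + l : ℕ) - 1) * τ = y + ((l + d : ℕ) : ℝ) * τ := by
    push_cast
    ring
  have hden : poch y τ (2 * d + 1) =
      poch y τ l * poch (y + l * τ) τ d * poch (y + ((l + d : ℕ) : ℝ) * τ) τ r := by
    rw [show 2 * d + 1 = l + d + r by omega, poch_add, poch_add]
  rw [show i + l - i = l by omega, show i + (d + 1) - (i + l) = r by omega, hshift, hnum, hden]
  have h₁ := (poch_pos hy0 hτ l).ne'
  have h₂ := (poch_pos (x := y + l * τ) (by positivity) hτ d).ne'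
  have h₃ := (poch_pos (x := y + ((l + d : ℕ) : ℝ) * τ) (by positivity) hτ r).ne'
  generalize poch y τ l = P₁ at *
  generalize poch (y + l * τ) τ d = P₂ at *
  generalize poch (y + ((l + d : ℕ) : ℝ) * τ) τ r = P₃ at *
  generalize poch (c + ((n : ℝ) - (i + l : ℕ)) * τ) τ l = Q₁ at *
  generalize poch (c + ((n : ℝ) - (i + (d + 1) : ℕ)) * τ) τ r = Q₂ at *
  field_simp
  linear_combination Q₁ * Q₂ * hchoose

theorem sum_Icc_uEntry_mul_uStarEntry {a τ : ℝ} (ha : 0 < a) (hτ : 0 ≤ τ) (c : ℝ) (n i j : ℕ) :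
    ∑ k ∈ Icc i j, uEntry a c τ n i k * uStarEntry a c τ n k j = if i = j then 1 else 0 := by
  rcases lt_trichotomy i j with hij | rfl | hji
  · obtain ⟨d, rfl⟩ : ∃ d, j = i + (d + 1) := ⟨j - i - 1, by omega⟩
    rw [if_neg (by omega), ← Ico_add_one_right_eq_Icc, sum_Ico_eq_sum_range,
      show i + (d + 1) + 1 - i = d + 2 by omega,
      sum_congr rfl fun l hl =>
        uEntry_mul_uStarEntry ha hτ c n i d l (Nat.lt_succ_iff.mp (mem_range.mp hl)),
      ← mul_sum, sum_range_neg_one_pow_mul_choose_mul_poch_eq_zero, mul_zero]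
  · simp [uEntry, uStarEntry, poch]
  · rw [Icc_eq_empty (by omega), sum_empty, if_neg (by omega)]

theorem sum_fin_ite_mul_ite {R : Type*} [Semiring R] (n : ℕ) (f g : ℕ → ℕ → R)
    (i j : Fin (n + 1)) :
    ∑ k : Fin (n + 1), (if (i : ℕ) ≤ k then f i k else 0) * (if (k : ℕ) ≤ j then g k j else 0) =
      ∑ k ∈ Icc (i : ℕ) j, f i k * g k j := by
  simp only [ite_zero_mul_ite_zero]
  rw [Fin.sum_univ_eq_sum_range (fun k => if (i : ℕ) ≤ k ∧ k ≤ j then f i k * g k j else 0),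
    ← sum_filter]
  congr 1
  ext k
  simp only [mem_filter, mem_range, mem_Icc, and_iff_right_iff_imp]
  omega

theorem stmt_3_general (n : ℕ) (α₁ α₂ τ α₃ : ℝ)
    (hα₁ : 0 < α₁) (hα₂ : 0 < α₂) (hτ : 0 < τ)
    (U Ustar : Matrix (Fin (n + 1)) (Fin (n + 1)) ℝ)
    (hU : ∀ i j : Fin (n + 1), U i j =
      if (i : ℕ) ≤ (j : ℕ) then
        (-1 : ℝ) ^ ((j : ℕ) - (i : ℕ)) * (Nat.choose (j : ℕ) (i : ℕ) : ℝ) *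
          (poch (α₃ + ((n : ℝ) - (j : ℕ)) * τ) τ ((j : ℕ) - (i : ℕ)) /
            poch (α₁ + α₂ + 2 * (i : ℕ) * τ) τ ((j : ℕ) - (i : ℕ)))
      else 0)
    (hUstar : ∀ i j : Fin (n + 1), Ustar i j =
      if (i : ℕ) ≤ (j : ℕ) then
        (Nat.choose (j : ℕ) (i : ℕ) : ℝ) *
          (poch (α₃ + ((n : ℝ) - (j : ℕ)) * τ) τ ((j : ℕ) - (i : ℕ)) /
            poch (α₁ + α₂ + ((j : ℕ) + (i : ℕ) - 1 : ℝ) * τ) τ ((j : ℕ) - (i : ℕ)))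
      else 0) :
    U * Ustar = 1 := by
  have hU' : ∀ i j : Fin (n + 1), U i j =
      if (i : ℕ) ≤ j then uEntry (α₁ + α₂) α₃ τ n i j else 0 := hU
  have hUstar' : ∀ i j : Fin (n + 1), Ustar i j =
      if (i : ℕ) ≤ j then uStarEntry (α₁ + α₂) α₃ τ n i j else 0 := hUstar
  ext i j
  rw [Matrix.mul_apply, Matrix.one_apply]
  simp only [hU', hUstar']
  rw [sum_fin_ite_mul_ite, sum_Icc_uEntry_mul_uStarEntry (by positivity) hτ.le]
  exact if_congr Fin.val_inj rfl rfl

theorem stmt_3 (n : ℕ) (hn : 1 ≤ n) (α₁ α₂ τ α₃ : ℝ)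
    (hα₁ : 0 < α₁) (hα₂ : 0 < α₂) (hτ : 0 < τ)
    (U Ustar : Matrix (Fin (n + 1)) (Fin (n + 1)) ℝ)
    (hU : ∀ i j : Fin (n + 1), U i j =
      if (i : ℕ) ≤ (j : ℕ) then
        (-1 : ℝ) ^ ((j : ℕ) - (i : ℕ)) * (Nat.choose (j : ℕ) (i : ℕ) : ℝ) *
          (poch (α₃ + ((n : ℝ) - (j : ℕ)) * τ) τ ((j : ℕ) - (i : ℕ)) /
            poch (α₁ + α₂ + 2 * (i : ℕ) * τ) τ ((j : ℕ) - (i : ℕ)))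
      else 0)
    (hUstar : ∀ i j : Fin (n + 1), Ustar i j =
      if (i : ℕ) ≤ (j : ℕ) then
        (Nat.choose (j : ℕ) (i : ℕ) : ℝ) *
          (poch (α₃ + ((n : ℝ) - (j : ℕ)) * τ) τ ((j : ℕ) - (i : ℕ)) /
            poch (α₁ + α₂ + ((j : ℕ) + (i : ℕ) - 1 : ℝ) * τ) τ ((j : ℕ) - (i : ℕ)))
      else 0) :
    U * Ustar = 1 :=
  stmt_3_general n α₁ α₂ τ α₃ hα₁ hα₂ hτ U Ustar hU hUstar
end

section
/- Let i, j be integers with 0 ≤ i ≤ n−1, 0 ≤ j ≤ n−1 and n ≤ i+j+1. Then for all z ∈ ℝⁿ, −Σ_{k=1}^{n} [ α₁(x₂−z_k)(x₃−z_k) + α₂(x₁−z_k)(x₃−z_k) + α₃(x₁−z_k)(x₂−z_k) ] · s^{(n−1)}_{i,j}(ẑ_k) = (α₁+α₂)·s^{(n)}_{i+1,j+1}(z) + α₃·s^{(n)}_{i,j+1}(z) − α₁·(x₂−x₁)·s^{(n)}_{i+1,j}(z). -/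
open Finset

/-- `φ^{(m)}_{i,j}(w) = ∏_{l=1}^{j}(w_l−x₁) ∏_{l=1}^{m−i}(x₂−w_l) ∏_{l=m−i+1}^{m}(x₃−w_l)`. -/
noncomputable def phiM (m : ℕ) (x₁ x₂ x₃ : ℝ) (i j : ℕ) (w : Fin m → ℝ) : ℝ :=
  ∏ l : Fin m,
    (if (l : ℕ) < j then (w l - x₁) else 1) *
      (if (l : ℕ) < m - i then (x₂ - w l) else (x₃ - w l))

/-- The symmetrization `s^{(m)}_{i,j}(w) = Σ_{σ ∈ S_m} φ^{(m)}_{i,j}(w_{σ(1)},…,w_{σ(m)})`. -/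
noncomputable def sM (m : ℕ) (x₁ x₂ x₃ : ℝ) (i j : ℕ) (w : Fin m → ℝ) : ℝ :=
  ∑ σ : Equiv.Perm (Fin m), phiM m x₁ x₂ x₃ i j (w ∘ σ)

/-- `ẑ_k = (z₁,…,z_{k−1},z_{k+1},…,z_n)`, deletion of the `k`-th coordinate. -/
def hat {n : ℕ} (z : Fin n → ℝ) (k : Fin n) (l : Fin (n - 1)) : ℝ :=
  if (l : ℕ) < (k : ℕ) then z ⟨(l : ℕ), by have := l.isLt; omega⟩
  else z ⟨(l : ℕ) + 1, by have := l.isLt; omega⟩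

/-!
Expanding the symmetrization along one position `p` gives
`s^{(n)}_{i',j'}(z) = Σ_k f(z_k) s^{(n-1)}_{i,j}(ẑ_k)` whenever deleting the `p`-th factor `f(w_p)` of
`φ^{(n)}_{i',j'}(w)` leaves `φ^{(n-1)}_{i,j}` of the remaining variables. For `(i+1,j+1)` take
`p = n-1-i` (it is `≤ j` because `n ≤ i+j+1`), for `(i,j+1)` the first and for `(i+1,j)` the last
position; the factors are `(t-x₁)(x₃-t)`, `(t-x₁)(x₂-t)` and `x₃-t`. The theorem then reduces to a
polynomial identity in `t = z_k` for each summand.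
-/
lemma hat_eq_comp_succAbove {m : ℕ} (z : Fin (m + 1) → ℝ) (k : Fin (m + 1)) :
    hat z k = z ∘ k.succAbove := by
  funext l
  simp only [hat, Function.comp_apply, Fin.succAbove]
  by_cases h : (l : ℕ) < (k : ℕ)
  · rw [if_pos h, if_pos (by simpa [Fin.lt_def] using h)]
    rfl
  · rw [if_neg h, if_neg (by simpa [Fin.lt_def] using h)]
    rfl

namespace Fin

variable {m : ℕ}

def permSuccAbove (p k : Fin (m + 1)) (σ : Equiv.Perm (Fin m)) : Equiv.Perm (Fin (m + 1)) :=
  (finSuccEquiv' p).trans ((Equiv.optionCongr σ).trans (finSuccEquiv' k).symm)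

@[simp]
lemma permSuccAbove_apply_self (p k : Fin (m + 1)) (σ : Equiv.Perm (Fin m)) :
    permSuccAbove p k σ p = k := by
  simp [permSuccAbove, finSuccEquiv'_at, finSuccEquiv'_symm_none]

@[simp]
lemma permSuccAbove_apply_succAbove (p k : Fin (m + 1)) (σ : Equiv.Perm (Fin m)) (l : Fin m) :
    permSuccAbove p k σ (p.succAbove l) = k.succAbove (σ l) := by
  simp [permSuccAbove, finSuccEquiv'_succAbove, finSuccEquiv'_symm_some]

lemma permSuccAbove_bijective (p : Fin (m + 1)) :
    Function.Bijective fun q : Fin (m + 1) × Equiv.Perm (Fin m) => permSuccAbove p q.1 q.2 := by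
  rw [Fintype.bijective_iff_injective_and_card]
  refine ⟨?_, by simp [Fintype.card_perm, Nat.factorial_succ]⟩
  rintro ⟨k₁, σ₁⟩ ⟨k₂, σ₂⟩ h
  obtain rfl : k₁ = k₂ := by
    simpa using congrArg (fun τ : Equiv.Perm (Fin (m + 1)) => τ p) h
  have hσ : σ₁ = σ₂ := by
    ext l
    have := congrArg (fun τ : Equiv.Perm (Fin (m + 1)) => τ (p.succAbove l)) h
    simp only [permSuccAbove_apply_succAbove] at this
    exact congrArg Fin.val (succAbove_right_injective this)
  rw [hσ]

lemma sum_perm_eq_sum_sum_perm_succAbove {M : Type*} [AddCommMonoid M] (p : Fin (m + 1))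
    (G : Fin (m + 1) → (Fin m → Fin (m + 1)) → M) :
    ∑ σ : Equiv.Perm (Fin (m + 1)), G (σ p) (σ ∘ p.succAbove) =
      ∑ k : Fin (m + 1), ∑ τ : Equiv.Perm (Fin m), G k (k.succAbove ∘ τ) := by
  rw [← Fintype.sum_prod_type']
  refine (Fintype.sum_bijective _ (permSuccAbove_bijective p) _ _ fun q => ?_).symm
  congr 1
  · simp
  · funext l
    simp

end Fin

lemma phiM_succ_eq_mul {m : ℕ} {x₁ x₂ x₃ : ℝ} {i j i' j' : ℕ} {p : Fin (m + 1)}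
    (w : Fin (m + 1) → ℝ)
    (h_lt : ∀ l < m, l < (p : ℕ) → ((l < j' ↔ l < j) ∧ (l < m + 1 - i' ↔ l < m - i)))
    (h_ge : ∀ l < m, (p : ℕ) ≤ l → ((l + 1 < j' ↔ l < j) ∧ (l + 1 < m + 1 - i' ↔ l < m - i))) :
    phiM (m + 1) x₁ x₂ x₃ i' j' w =
      (if (p : ℕ) < j' then w p - x₁ else 1) *
        (if (p : ℕ) < m + 1 - i' then x₂ - w p else x₃ - w p) *
        phiM m x₁ x₂ x₃ i j (w ∘ p.succAbove) := by
  unfold phiM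
  rw [Fin.prod_univ_succAbove _ p]
  congr 1
  refine prod_congr rfl fun l _ => ?_
  rcases lt_or_ge l.castSucc p with h | h
  · obtain ⟨e₁, e₂⟩ := h_lt l l.isLt h
    simp only [Function.comp_apply, Fin.succAbove_of_castSucc_lt p l h, Fin.val_castSucc, e₁, e₂]
  · obtain ⟨e₁, e₂⟩ := h_ge l l.isLt h
    simp only [Function.comp_apply, Fin.succAbove_of_le_castSucc p l h, Fin.val_succ, e₁, e₂]

lemma sM_succ_eq_sum_of_phiM_succ_eq_mul {m : ℕ} {x₁ x₂ x₃ : ℝ} {i j i' j' : ℕ} (f : ℝ → ℝ)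
    (p : Fin (m + 1))
    (h : ∀ w, phiM (m + 1) x₁ x₂ x₃ i' j' w = f (w p) * phiM m x₁ x₂ x₃ i j (w ∘ p.succAbove))
    (z : Fin (m + 1) → ℝ) :
    sM (m + 1) x₁ x₂ x₃ i' j' z =
      ∑ k : Fin (m + 1), f (z k) * sM m x₁ x₂ x₃ i j (z ∘ k.succAbove) := by
  simp only [sM, h, mul_sum]
  exact Fin.sum_perm_eq_sum_sum_perm_succAbove p
    fun k e => f (z k) * phiM m x₁ x₂ x₃ i j (z ∘ e)

section Recursions

variable {m : ℕ} (x₁ x₂ x₃ : ℝ) {i j : ℕ} (z : Fin (m + 1) → ℝ)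

lemma sM_succ_succ_succ_eq_sum (hij : m ≤ i + j) :
    sM (m + 1) x₁ x₂ x₃ (i + 1) (j + 1) z =
      ∑ k, (z k - x₁) * (x₃ - z k) * sM m x₁ x₂ x₃ i j (z ∘ k.succAbove) := by
  refine sM_succ_eq_sum_of_phiM_succ_eq_mul (fun t => (t - x₁) * (x₃ - t)) ⟨m - i, by omega⟩
    (fun w => ?_) z
  rw [phiM_succ_eq_mul (i := i) (j := j) w ?_ ?_, if_pos ?_, if_neg ?_]
  all_goals dsimp only; intros; omega

lemma sM_succ_self_succ_eq_sum (hi : i ≤ m) :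
    sM (m + 1) x₁ x₂ x₃ i (j + 1) z =
      ∑ k, (z k - x₁) * (x₂ - z k) * sM m x₁ x₂ x₃ i j (z ∘ k.succAbove) := by
  refine sM_succ_eq_sum_of_phiM_succ_eq_mul (fun t => (t - x₁) * (x₂ - t))
    0 (fun w => ?_) z
  rw [phiM_succ_eq_mul (i := i) (j := j) w ?_ ?_, if_pos ?_, if_pos ?_]
  all_goals simp only [Fin.val_zero]; intros; omega

lemma sM_succ_succ_self_eq_sum (hj : j ≤ m) :
    sM (m + 1) x₁ x₂ x₃ (i + 1) j z =
      ∑ k, (x₃ - z k) * sM m x₁ x₂ x₃ i j (z ∘ k.succAbove) := by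
  refine sM_succ_eq_sum_of_phiM_succ_eq_mul (fun t => x₃ - t) (Fin.last m)
    (fun w => ?_) z
  rw [phiM_succ_eq_mul (i := i) (j := j) w ?_ ?_, if_neg ?_, if_neg ?_, one_mul]
  all_goals rw [Fin.val_last]; intros; omega

end Recursions

theorem stmt_18_general (n : ℕ) (hn : 2 ≤ n) (x₁ x₂ x₃ α₁ α₂ α₃ : ℝ)
    (i j : ℕ) (hi : i ≤ n - 1) (hj : j ≤ n - 1) (hij : n ≤ i + j + 1)
    (z : Fin n → ℝ) :
    -∑ k : Fin n,
        (α₁ * (x₂ - z k) * (x₃ - z k) + α₂ * (x₁ - z k) * (x₃ - z k) +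
            α₃ * (x₁ - z k) * (x₂ - z k)) *
          sM (n - 1) x₁ x₂ x₃ i j (hat z k) =
      (α₁ + α₂) * sM n x₁ x₂ x₃ (i + 1) (j + 1) z +
        α₃ * sM n x₁ x₂ x₃ i (j + 1) z -
        α₁ * (x₂ - x₁) * sM n x₁ x₂ x₃ (i + 1) j z := by
  obtain ⟨m, rfl⟩ : ∃ m, n = m + 1 := ⟨n - 1, by omega⟩
  rw [Nat.add_sub_cancel] at hi hj
  change -∑ k : Fin (m + 1), _ * sM m x₁ x₂ x₃ i j (hat z k) = _
  rw [sM_succ_succ_succ_eq_sum x₁ x₂ x₃ z (by omega), sM_succ_self_succ_eq_sum x₁ x₂ x₃ z hi,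
    sM_succ_succ_self_eq_sum x₁ x₂ x₃ z hj, mul_sum, mul_sum, mul_sum, ← sum_add_distrib,
    ← sum_sub_distrib, ← sum_neg_distrib]
  refine sum_congr rfl fun k _ => ?_
  rw [hat_eq_comp_succAbove]
  ring

theorem stmt_18 (n : ℕ) (hn : 2 ≤ n) (x₁ x₂ x₃ α₁ α₂ α₃ τ : ℝ)
    (i j : ℕ) (hi : i ≤ n - 1) (hj : j ≤ n - 1) (hij : n ≤ i + j + 1)
    (z : Fin n → ℝ) :
    -∑ k : Fin n,
        (α₁ * (x₂ - z k) * (x₃ - z k) + α₂ * (x₁ - z k) * (x₃ - z k) +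
            α₃ * (x₁ - z k) * (x₂ - z k)) *
          sM (n - 1) x₁ x₂ x₃ i j (hat z k) =
      (α₁ + α₂) * sM n x₁ x₂ x₃ (i + 1) (j + 1) z +
        α₃ * sM n x₁ x₂ x₃ i (j + 1) z -
        α₁ * (x₂ - x₁) * sM n x₁ x₂ x₃ (i + 1) j z :=
  stmt_18_general n hn x₁ x₂ x₃ α₁ α₂ α₃ i j hi hj hij z
end
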